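/- Let G and H be connected finite simple graphs of order n₁ ≥ 2 and n₂ ≥ 2, with maximum degrees Δ₁ and Δ₂, respectively. If Δ₁ ≠ n₁ − 1 or Δ₂ ≠ n₂ − 1, then ϖ(G + H) = ϖ(G) + ϖ(H). -/

import Mathlib

open SimpleGraph

/-- A vertex `w` strongly resolves the pair `u`, `v` if `v` lies on some shortest `u`–`w`
path or `u` lies on some shortest `v`–`w` path. -/
def StronglyResolves {V : Type*} (G : SimpleGraph V) (w u v : V) : Prop :=
  G.dist u w = G.dist u v + G.dist v w ∨ G.dist v w = G.dist v u + G.dist u w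

/-- `S` is a strong resolving set for `G` if every pair of distinct vertices is strongly
resolved by some vertex of `S`. -/
def IsStrongResolvingSet {V : Type*} (G : SimpleGraph V) (S : Set V) : Prop :=
  ∀ u v : V, u ≠ v → ∃ w ∈ S, StronglyResolves G w u v

/-- The strong metric dimension: the minimum cardinality of a strong resolving set. -/
noncomputable def strongDim {V : Type*} (G : SimpleGraph V) [Fintype V] : ℕ :=
  sInf {k | ∃ S : Finset V, IsStrongResolvingSet G ↑S ∧ S.card = k}

/-- The closed neighborhood of a vertex. -/
def closedNbhd {V : Type*} (G : SimpleGraph V) (v : V) : Set V :=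
  insert v (G.neighborSet v)

/-- A twin-free clique: a clique containing no pair of true twins. -/
def IsTwinFreeClique {V : Type*} (G : SimpleGraph V) (X : Finset V) : Prop :=
  G.IsClique ↑X ∧ ∀ u ∈ X, ∀ v ∈ X, u ≠ v → closedNbhd G u ≠ closedNbhd G v

/-- The twin-free clique number: maximum cardinality of a twin-free clique. -/
noncomputable def twinFreeCliqueNum {V : Type*} (G : SimpleGraph V) [Fintype V] : ℕ :=
  sSup {k | ∃ X : Finset V, IsTwinFreeClique G X ∧ X.card = k}

/-- Adjacency relation of the join of two graphs. -/
def joinAdj {V W : Type*} (G : SimpleGraph V) (H : SimpleGraph W) :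
    V ⊕ W → V ⊕ W → Prop
  | Sum.inl a, Sum.inl b => G.Adj a b
  | Sum.inr a, Sum.inr b => H.Adj a b
  | Sum.inl _, Sum.inr _ => True
  | Sum.inr _, Sum.inl _ => True

/-- The join `G + H`: disjoint union of `G` and `H` plus all edges between them. -/
def joinGraph {V W : Type*} (G : SimpleGraph V) (H : SimpleGraph W) :
    SimpleGraph (V ⊕ W) where
  Adj := joinAdj G H
  symm := by
    constructor
    rintro (a | a) (b | b) h
    · exact G.adj_symm h
    · trivial
    · trivial
    · exact H.adj_symm h
  loopless := by
    constructor
    rintro (a | a) h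
    · exact G.loopless.1 a h
    · exact H.loopless.1 a h

/-- Adjacency relation of the corona product `G ⊙ H`. -/
def coronaAdj {V W : Type*} (G : SimpleGraph V) (H : SimpleGraph W) :
    V ⊕ V × W → V ⊕ V × W → Prop
  | Sum.inl a, Sum.inl b => G.Adj a b
  | Sum.inr p, Sum.inr q => p.1 = q.1 ∧ H.Adj p.2 q.2
  | Sum.inl a, Sum.inr q => a = q.1
  | Sum.inr p, Sum.inl b => p.1 = b

/-- The corona product `G ⊙ H`: one copy of `G` and one copy of `H` for each vertex of
`G`, with the `i`-th vertex of `G` joined to every vertex of the `i`-th copy of `H`. -/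
def corona {V W : Type*} (G : SimpleGraph V) (H : SimpleGraph W) :
    SimpleGraph (V ⊕ V × W) where
  Adj := coronaAdj G H
  symm := by
    constructor
    rintro (a | p) (b | q) h
    · exact G.adj_symm h
    · exact h.symm
    · exact h.symm
    · exact ⟨h.1.symm, H.adj_symm h.2⟩
  loopless := by
    constructor
    rintro (a | p) h
    · exact G.loopless.1 a h
    · exact H.loopless.1 p.2 h.2

/-- The disjoint union of copies of `H`, one copy for each element of `V`. -/
def copies (V : Type*) {W : Type*} (H : SimpleGraph W) : SimpleGraph (V × W) where
  Adj p q := p.1 = q.1 ∧ H.Adj p.2 q.2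
  symm := ⟨fun _ _ h => ⟨h.1.symm, h.2.symm⟩⟩
  loopless := ⟨fun p h => H.loopless.1 p.2 h.2⟩

/-- The algebraic connectivity: the second smallest eigenvalue (with multiplicity,
in nondecreasing order) of the Laplacian matrix. -/
noncomputable def algebraicConnectivity {V : Type*} (G : SimpleGraph V) [Fintype V]
    [DecidableEq V] [DecidableRel G.Adj] : ℝ :=
  (((Finset.univ.val.map ((G.posSemidef_lapMatrix ℝ).isHermitian.eigenvalues)).sort
    (· ≤ ·)).getD 1 0)

/-! In `G + H` the closed neighbourhood of a vertex of `G` is its closed neighbourhood in `G`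
together with all of `H`. Hence two vertices on the same side are twins in `G + H` exactly when
they are twins in their own graph, while a vertex of `G` and a vertex of `H` are twins exactly when
both are universal. A twin-free clique of `G + H` therefore splits into twin-free cliques of `G`
and `H`, and conversely the union of twin-free cliques of `G` and `H` is a twin-free clique of
`G + H` as soon as one of the two graphs has no universal vertex, which is what the condition on
the maximum degrees says. -/

open Set

section TwinFreeCliqueNum

variable {V : Type*} {G : SimpleGraph V}

lemma closedNbhd_eq_univ_iff {v : V} : closedNbhd G v = univ ↔ G.IsUniversal v :=
  insert_neighborSet_eq_univ

lemma not_isUniversal_of_maxDegree_ne [Fintype V] [DecidableRel G.Adj]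
    (h : G.maxDegree ≠ Fintype.card V - 1) (v : V) : ¬ G.IsUniversal v := by
  intro hv
  have : Nonempty V := ⟨v⟩
  have hdeg := (G.degree_eq_card_sub_one v).mpr hv
  have := G.degree_le_maxDegree v
  have := G.maxDegree_lt_card_verts
  omega

lemma bddAbove_setOf_isTwinFreeClique_card (G : SimpleGraph V) [Fintype V] :
    BddAbove {k | ∃ X : Finset V, IsTwinFreeClique G X ∧ X.card = k} := by
  refine ⟨Fintype.card V, ?_⟩
  rintro k ⟨X, -, rfl⟩
  exact X.card_le_univ

lemma IsTwinFreeClique.card_le_twinFreeCliqueNum [Fintype V] {X : Finset V}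
    (hX : IsTwinFreeClique G X) : X.card ≤ twinFreeCliqueNum G :=
  le_csSup (bddAbove_setOf_isTwinFreeClique_card G) ⟨X, hX, rfl⟩

lemma exists_isTwinFreeClique_card_eq (G : SimpleGraph V) [Fintype V] :
    ∃ X : Finset V, IsTwinFreeClique G X ∧ X.card = twinFreeCliqueNum G := by
  refine Nat.sSup_mem ?_ (bddAbove_setOf_isTwinFreeClique_card G)
  exact ⟨0, ∅, by simp [IsTwinFreeClique]⟩

end TwinFreeCliqueNum

section Join

variable {V W : Type*} {G : SimpleGraph V} {H : SimpleGraph W}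

@[simp] lemma joinGraph_adj_inl_inl {a b : V} :
    (joinGraph G H).Adj (.inl a) (.inl b) ↔ G.Adj a b := Iff.rfl

@[simp] lemma joinGraph_adj_inr_inr {a b : W} :
    (joinGraph G H).Adj (.inr a) (.inr b) ↔ H.Adj a b := Iff.rfl

@[simp] lemma joinGraph_adj_inl_inr (a : V) (b : W) : (joinGraph G H).Adj (.inl a) (.inr b) :=
  trivial

@[simp] lemma joinGraph_adj_inr_inl (a : W) (b : V) : (joinGraph G H).Adj (.inr a) (.inl b) :=
  trivial

lemma sumEquiv_closedNbhd_joinGraph_inl (a : V) :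
    sumEquiv (closedNbhd (joinGraph G H) (.inl a)) = (closedNbhd G a, univ) := by
  ext <;> simp [closedNbhd]

lemma sumEquiv_closedNbhd_joinGraph_inr (b : W) :
    sumEquiv (closedNbhd (joinGraph G H) (.inr b)) = (univ, closedNbhd H b) := by
  ext <;> simp [closedNbhd]

lemma closedNbhd_joinGraph_inl_inj {a a' : V} :
    closedNbhd (joinGraph G H) (.inl a) = closedNbhd (joinGraph G H) (.inl a') ↔
      closedNbhd G a = closedNbhd G a' := by
  rw [← sumEquiv.injective.eq_iff, sumEquiv_closedNbhd_joinGraph_inl,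
    sumEquiv_closedNbhd_joinGraph_inl]
  simp

lemma closedNbhd_joinGraph_inr_inj {b b' : W} :
    closedNbhd (joinGraph G H) (.inr b) = closedNbhd (joinGraph G H) (.inr b') ↔
      closedNbhd H b = closedNbhd H b' := by
  rw [← sumEquiv.injective.eq_iff, sumEquiv_closedNbhd_joinGraph_inr,
    sumEquiv_closedNbhd_joinGraph_inr]
  simp

lemma closedNbhd_joinGraph_inl_eq_inr_iff {a : V} {b : W} :
    closedNbhd (joinGraph G H) (.inl a) = closedNbhd (joinGraph G H) (.inr b) ↔
      G.IsUniversal a ∧ H.IsUniversal b := by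
  rw [← sumEquiv.injective.eq_iff, sumEquiv_closedNbhd_joinGraph_inl,
    sumEquiv_closedNbhd_joinGraph_inr, Prod.mk.injEq, closedNbhd_eq_univ_iff, eq_comm,
    closedNbhd_eq_univ_iff]

lemma IsTwinFreeClique.toLeft {X : Finset (V ⊕ W)} (hX : IsTwinFreeClique (joinGraph G H) X) :
    IsTwinFreeClique G X.toLeft :=
  ⟨fun _ ha _ hb hab ↦ hX.1 (Finset.mem_toLeft.mp ha) (Finset.mem_toLeft.mp hb)
      (Sum.inl_injective.ne hab),
    fun _ ha _ hb hab hN ↦ hX.2 _ (Finset.mem_toLeft.mp ha) _ (Finset.mem_toLeft.mp hb)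
      (Sum.inl_injective.ne hab) (closedNbhd_joinGraph_inl_inj.mpr hN)⟩

lemma IsTwinFreeClique.toRight {X : Finset (V ⊕ W)} (hX : IsTwinFreeClique (joinGraph G H) X) :
    IsTwinFreeClique H X.toRight :=
  ⟨fun _ ha _ hb hab ↦ hX.1 (Finset.mem_toRight.mp ha) (Finset.mem_toRight.mp hb)
      (Sum.inr_injective.ne hab),
    fun _ ha _ hb hab hN ↦ hX.2 _ (Finset.mem_toRight.mp ha) _ (Finset.mem_toRight.mp hb)
      (Sum.inr_injective.ne hab) (closedNbhd_joinGraph_inr_inj.mpr hN)⟩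

lemma IsTwinFreeClique.disjSum {A : Finset V} {B : Finset W} (hA : IsTwinFreeClique G A)
    (hB : IsTwinFreeClique H B)
    (hAB : ∀ a ∈ A, ∀ b ∈ B, ¬ (G.IsUniversal a ∧ H.IsUniversal b)) :
    IsTwinFreeClique (joinGraph G H) (A.disjSum B) := by
  refine ⟨?_, ?_⟩
  · rintro (a | a) ha (b | b) hb hab <;> simp only [Finset.mem_coe, Finset.inl_mem_disjSum,
      Finset.inr_mem_disjSum] at ha hb
    · exact hA.1 ha hb (ne_of_apply_ne _ hab)
    · trivial
    · trivial
    · exact hB.1 ha hb (ne_of_apply_ne _ hab)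
  · rintro (a | a) ha (b | b) hb hab hN <;> simp only [Finset.inl_mem_disjSum,
      Finset.inr_mem_disjSum] at ha hb
    · exact hA.2 a ha b hb (ne_of_apply_ne _ hab) (closedNbhd_joinGraph_inl_inj.mp hN)
    · exact hAB a ha b hb (closedNbhd_joinGraph_inl_eq_inr_iff.mp hN)
    · exact hAB b hb a ha (closedNbhd_joinGraph_inl_eq_inr_iff.mp hN.symm)
    · exact hB.2 a ha b hb (ne_of_apply_ne _ hab) (closedNbhd_joinGraph_inr_inj.mp hN)

lemma twinFreeCliqueNum_joinGraph_le [Fintype V] [Fintype W] (G : SimpleGraph V)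
    (H : SimpleGraph W) :
    twinFreeCliqueNum (joinGraph G H) ≤ twinFreeCliqueNum G + twinFreeCliqueNum H := by
  obtain ⟨X, hX, hcard⟩ := exists_isTwinFreeClique_card_eq (joinGraph G H)
  rw [← hcard, ← Finset.card_toLeft_add_card_toRight]
  exact add_le_add hX.toLeft.card_le_twinFreeCliqueNum hX.toRight.card_le_twinFreeCliqueNum

end Join

theorem twinFreeCliqueNum_join_general {V W : Type*} [Fintype V] [Fintype W]
    (G : SimpleGraph V) (H : SimpleGraph W) [DecidableRel G.Adj] [DecidableRel H.Adj]
    (h : G.maxDegree ≠ Fintype.card V - 1 ∨ H.maxDegree ≠ Fintype.card W - 1) :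
    twinFreeCliqueNum (joinGraph G H) = twinFreeCliqueNum G + twinFreeCliqueNum H := by
  refine le_antisymm (twinFreeCliqueNum_joinGraph_le G H) ?_
  obtain ⟨A, hA, hAcard⟩ := exists_isTwinFreeClique_card_eq G
  obtain ⟨B, hB, hBcard⟩ := exists_isTwinFreeClique_card_eq H
  rw [← hAcard, ← hBcard, ← Finset.card_disjSum]
  refine (hA.disjSum hB fun a _ b _ hab ↦ ?_).card_le_twinFreeCliqueNum
  exact h.elim (not_isUniversal_of_maxDegree_ne · a hab.1)
    (not_isUniversal_of_maxDegree_ne · b hab.2)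

/-- If `G`, `H` are connected graphs of order `n₁, n₂ ≥ 2` with maximum
degrees `Δ₁ ≠ n₁ − 1` or `Δ₂ ≠ n₂ − 1`, then `ϖ(G + H) = ϖ(G) + ϖ(H)`. -/
theorem twinFreeCliqueNum_join {V W : Type*} [Fintype V] [Fintype W]
    (G : SimpleGraph V) (H : SimpleGraph W) [DecidableRel G.Adj] [DecidableRel H.Adj]
    (hG : G.Connected) (hH : H.Connected)
    (hn1 : 2 ≤ Fintype.card V) (hn2 : 2 ≤ Fintype.card W)
    (h : G.maxDegree ≠ Fintype.card V - 1 ∨ H.maxDegree ≠ Fintype.card W - 1) :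
    twinFreeCliqueNum (joinGraph G H) = twinFreeCliqueNum G + twinFreeCliqueNum H :=
  twinFreeCliqueNum_join_general G H h
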